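/- arXiv:2212.12240 — 4 statements merged into one kernel-verified Lean document; each statement's English description precedes it below -/
import Mathlib

section
/- For every team i and every TTP-2 itinerary pattern P for i, the cost of P is at least D_i + D_M, where D_M is the minimum weight of a pairing (perfect matching) of the n teams. -/
open Finset

/-- Feasibility of a TTP-2 schedule given by opponent and home/away functions. -/
def ttpFeasible (n : ℕ) (opp : Fin (2*(n-1)) → Fin n → Fin n)
    (loc : Fin (2*(n-1)) → Fin n → Bool) : Prop :=
  (∀ d i, opp d i ≠ i) ∧
  (∀ d i, opp d (opp d i) = i) ∧
  (∀ d i, loc d (opp d i) = !(loc d i)) ∧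
  (∀ i j : Fin n, i ≠ j → ∃! d : Fin (2*(n-1)), opp d i = j ∧ loc d i = false) ∧
  (∀ (d : ℕ) (hd : d + 1 < 2*(n-1)) (i : Fin n),
      opp ⟨d+1, hd⟩ i ≠ opp ⟨d, by omega⟩ i) ∧
  (∀ (d : ℕ) (hd : d + 2 < 2*(n-1)) (i : Fin n),
      ¬(loc ⟨d+1, by omega⟩ i = loc ⟨d, by omega⟩ i ∧
        loc ⟨d+2, hd⟩ i = loc ⟨d+1, by omega⟩ i))

/-- The venue of team `i` on day `d` (days indexed by naturals; out-of-range
days, which never occur below, default to home). -/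
def ttpVen (n : ℕ) (opp : Fin (2*(n-1)) → Fin n → Fin n)
    (loc : Fin (2*(n-1)) → Fin n → Bool) (d : ℕ) (i : Fin n) : Fin n :=
  if h : d < 2*(n-1) then (if loc ⟨d, h⟩ i then i else opp ⟨d, h⟩ i) else i

/-- The travel distance of team `i` in a schedule. -/
noncomputable def ttpTravel (n : ℕ) (D : Fin n → Fin n → ℝ)
    (opp : Fin (2*(n-1)) → Fin n → Fin n)
    (loc : Fin (2*(n-1)) → Fin n → Bool) (i : Fin n) : ℝ :=
  D i (ttpVen n opp loc 0 i)
  + ∑ d ∈ Finset.range (2*(n-1) - 1),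
      D (ttpVen n opp loc d i) (ttpVen n opp loc (d+1) i)
  + D (ttpVen n opp loc (2*(n-1) - 1) i) i

/-- The total distance of a schedule. -/
noncomputable def ttpTotal (n : ℕ) (D : Fin n → Fin n → ℝ)
    (opp : Fin (2*(n-1)) → Fin n → Fin n)
    (loc : Fin (2*(n-1)) → Fin n → Bool) : ℝ :=
  ∑ i : Fin n, ttpTravel n D opp loc i

/-- A pairing (perfect matching) of the `n` teams: a family of blocks of size 2
covering every team exactly once. -/
def isPairing (n : ℕ) (M : Finset (Finset (Fin n))) : Prop :=
  (∀ e ∈ M, e.card = 2) ∧ (∀ i : Fin n, ∃! e, e ∈ M ∧ i ∈ e)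

/-- The weight `D a b` of a block `{a, b}` (written symmetrically). -/
noncomputable def blockWeight (n : ℕ) (D : Fin n → Fin n → ℝ)
    (f : Finset (Fin n)) : ℝ :=
  (∑ a ∈ f, ∑ b ∈ f, D a b) / 2

/-- The weight of a pairing: the sum of `D a b` over its blocks `{a, b}`. -/
noncomputable def pairingWeight (n : ℕ) (D : Fin n → Fin n → ℝ)
    (M : Finset (Finset (Fin n))) : ℝ :=
  ∑ e ∈ M, blockWeight n D e

/-- `D_G`: the sum of `D i j` over all unordered pairs of distinct teams. -/
noncomputable def sumDG (n : ℕ) (D : Fin n → Fin n → ℝ) : ℝ :=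
  (∑ i : Fin n, ∑ j ∈ Finset.univ.erase i, D i j) / 2

/-- `D_i`: the sum of `D i j` over all `j ≠ i`. -/
noncomputable def sumDi (n : ℕ) (D : Fin n → Fin n → ℝ) (i : Fin n) : ℝ :=
  ∑ j ∈ Finset.univ.erase i, D i j

/-- The distance matrix axioms: zero diagonal, nonnegativity, symmetry and the
triangle inequality. -/
def isMetric (n : ℕ) (D : Fin n → Fin n → ℝ) : Prop :=
  (∀ i, D i i = 0) ∧ (∀ i j, 0 ≤ D i j) ∧ (∀ i j, D i j = D j i) ∧
  (∀ i j h, D i j ≤ D i h + D h j)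

/-- A TTP-2 itinerary pattern for team `i`: a partition of the set of the other
teams into blocks of size 1 or 2. -/
def isPattern (n : ℕ) (i : Fin n) (P : Finset (Finset (Fin n))) : Prop :=
  (∀ e ∈ P, e.card = 1 ∨ e.card = 2) ∧
  (∀ e ∈ P, i ∉ e) ∧
  (∀ j : Fin n, j ≠ i → ∃! e, e ∈ P ∧ j ∈ e)

/-- The cost of an itinerary pattern: `2 * D i a` for a singleton block `{a}`,
and `D i a + D a b + D b i` for a block `{a, b}` of size 2. -/
noncomputable def patternCost (n : ℕ) (D : Fin n → Fin n → ℝ) (i : Fin n)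
    (P : Finset (Finset (Fin n))) : ℝ :=
  ∑ e ∈ P, ((∑ a ∈ e, D i a) +
    if e.card = 1 then ∑ a ∈ e, D i a else blockWeight n D e)

/-- `D(e, f)`: the sum of `D a b` over `a ∈ e` and `b ∈ f`. -/
noncomputable def crossDist (n : ℕ) (D : Fin n → Fin n → ℝ)
    (e f : Finset (Fin n)) : ℝ :=
  ∑ a ∈ e, ∑ b ∈ f, D a b

/-!
Split the pattern into its singleton blocks and its blocks `{a, b}`. Team `i` together with
the singleton teams is a set of even size; pair it up arbitrarily. By the triangle inequality
through `i`, a pair `{x, y}` weighs at most `D i x + D i y`, so these pairs weigh at most the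
sum of `D i a` over the singletons `{a}` (as `D i i = 0`). Together with the blocks `{a, b}`
of the pattern they form a pairing of weight at most `patternCost - D_i`.
-/

section ExactCover

variable {α : Type*}

/-- Unlike in a `Finpartition`, empty blocks are allowed. -/
def IsExactCover (N : Finset (Finset α)) (s : Finset α) : Prop :=
  (∀ e ∈ N, e ⊆ s) ∧ ∀ x ∈ s, ∃! e, e ∈ N ∧ x ∈ e

namespace IsExactCover

variable {N N' : Finset (Finset α)} {s t : Finset α}

theorem singleton (s : Finset α) : IsExactCover {s} s :=
  ⟨by simp, fun x hx => ⟨s, ⟨mem_singleton_self s, hx⟩, fun e he => mem_singleton.mp he.1⟩⟩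

theorem pairwiseDisjoint (h : IsExactCover N s) : (N : Set (Finset α)).PairwiseDisjoint id :=
  fun e he _ hf hef => disjoint_left.mpr fun x hxe hxf =>
    hef ((h.2 x (h.1 e he hxe)).unique ⟨he, hxe⟩ ⟨hf, hxf⟩)

theorem biUnion_eq [DecidableEq α] (h : IsExactCover N s) : N.biUnion id = s := by
  ext x
  refine ⟨fun hx => ?_, fun hx => ?_⟩
  · obtain ⟨e, he, hxe⟩ := mem_biUnion.mp hx
    exact h.1 e he hxe
  · obtain ⟨e, ⟨he, hxe⟩, -⟩ := h.2 x hx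
    exact mem_biUnion.mpr ⟨e, he, hxe⟩

theorem sum_sum [DecidableEq α] {β : Type*} [AddCommMonoid β] (h : IsExactCover N s)
    (f : α → β) : ∑ e ∈ N, ∑ x ∈ e, f x = ∑ x ∈ s, f x := by
  rw [← h.biUnion_eq, sum_biUnion h.pairwiseDisjoint]
  rfl

theorem sum_card [DecidableEq α] (h : IsExactCover N s) : ∑ e ∈ N, e.card = s.card := by
  simpa only [card_eq_sum_ones] using h.sum_sum (fun _ => 1)

theorem filter [DecidableEq α] (h : IsExactCover N s) (p : Finset α → Prop) [DecidablePred p] :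
    IsExactCover (N.filter p) ((N.filter p).biUnion id) := by
  refine ⟨fun e he => subset_biUnion_of_mem id he, fun x hx => ?_⟩
  obtain ⟨e, he, hxe⟩ := mem_biUnion.mp hx
  refine ⟨e, ⟨he, hxe⟩, fun f hf => ?_⟩
  have hxs := h.1 e (mem_filter.mp he).1 hxe
  exact (h.2 x hxs).unique ⟨(mem_filter.mp hf.1).1, hf.2⟩ ⟨(mem_filter.mp he).1, hxe⟩

theorem union [DecidableEq α] (hN : IsExactCover N s) (hN' : IsExactCover N' t)
    (hst : Disjoint s t) : IsExactCover (N ∪ N') (s ∪ t) := by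
  refine ⟨fun e he => ?_, fun x hx => ?_⟩
  · rcases mem_union.mp he with he | he
    · exact (hN.1 e he).trans subset_union_left
    · exact (hN'.1 e he).trans subset_union_right
  rcases mem_union.mp hx with hxs | hxt
  · obtain ⟨e, ⟨he, hxe⟩, huniq⟩ := hN.2 x hxs
    refine ⟨e, ⟨mem_union_left _ he, hxe⟩, fun f ⟨hf, hxf⟩ => ?_⟩
    rcases mem_union.mp hf with hf | hf
    · exact huniq f ⟨hf, hxf⟩
    · exact absurd (hN'.1 f hf hxf) (disjoint_left.mp hst hxs)
  · obtain ⟨e, ⟨he, hxe⟩, huniq⟩ := hN'.2 x hxt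
    refine ⟨e, ⟨mem_union_right _ he, hxe⟩, fun f ⟨hf, hxf⟩ => ?_⟩
    rcases mem_union.mp hf with hf | hf
    · exact absurd (hN.1 f hf hxf) (disjoint_right.mp hst hxt)
    · exact huniq f ⟨hf, hxf⟩

end IsExactCover

theorem exists_isExactCover_card_two_of_even [DecidableEq α] (s : Finset α)
    (hs : Even s.card) : ∃ N, IsExactCover N s ∧ ∀ e ∈ N, e.card = 2 := by
  induction s using Finset.strongInduction with
  | H s ih =>
    rcases s.eq_empty_or_nonempty with rfl | hne
    · exact ⟨∅, ⟨by simp, by simp⟩, by simp⟩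
    have h2 : 2 ≤ s.card := by
      obtain ⟨k, hk⟩ := hs
      have := hne.card_pos
      omega
    obtain ⟨t, hts, ht⟩ := exists_subset_card_eq h2
    have hrest : s \ t ⊂ s := sdiff_ssubset hts (card_pos.mp (by omega))
    obtain ⟨N, hN, hNtwo⟩ := ih (s \ t) hrest (by
      rw [card_sdiff_of_subset hts, ht]
      exact (Nat.even_sub h2).mpr (iff_of_true hs even_two))
    refine ⟨insert t N, ?_, ?_⟩
    · rw [insert_eq, ← union_sdiff_of_subset hts]
      exact (IsExactCover.singleton t).union hN disjoint_sdiff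
    · simpa [ht] using hNtwo

end ExactCover

variable {n : ℕ} {D : Fin n → Fin n → ℝ} {i : Fin n} {P : Finset (Finset (Fin n))}

theorem isPattern.isExactCover (hP : isPattern n i P) : IsExactCover P (univ.erase i) :=
  ⟨fun e he x hx => mem_erase.mpr ⟨fun h => hP.2.1 e he (h ▸ hx), mem_univ x⟩,
    fun x hx => hP.2.2 x (ne_of_mem_erase hx)⟩

theorem IsExactCover.isPairing {M : Finset (Finset (Fin n))} (hM : IsExactCover M univ)
    (htwo : ∀ e ∈ M, e.card = 2) : isPairing n M :=
  ⟨htwo, fun x => hM.2 x (mem_univ x)⟩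

theorem blockWeight_le_sum_dist (hD : isMetric n D) (i : Fin n) {e : Finset (Fin n)}
    (he : e.card = 2) : blockWeight n D e ≤ ∑ x ∈ e, D i x := by
  obtain ⟨hdiag, -, hsymm, htri⟩ := hD
  obtain ⟨a, b, hab, rfl⟩ := card_eq_two.mp he
  have hba : D b a ≤ D i a + D i b := by linarith [htri b a i, hsymm b i]
  simp only [blockWeight, sum_pair hab, hdiag, hsymm b a] at hba ⊢
  linarith

theorem patternCost_eq (hP : isPattern n i P) :
    patternCost n D i P = sumDi n D i + ∑ e ∈ P with e.card = 1, ∑ a ∈ e, D i a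
      + ∑ e ∈ P with e.card ≠ 1, blockWeight n D e := by
  rw [patternCost, sum_add_distrib, sum_ite, hP.isExactCover.sum_sum, sumDi, add_assoc]

theorem exists_isPairing_pairingWeight_le (hne : Even n) (hD : isMetric n D)
    (hP : isPattern n i P) :
    ∃ M, isPairing n M ∧ pairingWeight n D M ≤
      ∑ e ∈ P with e.card = 1, ∑ a ∈ e, D i a + ∑ e ∈ P with e.card ≠ 1, blockWeight n D e := by
  set P₂ := P.filter (fun e => e.card ≠ 1)
  set U := P₂.biUnion id
  have hP₂ : IsExactCover P₂ U := hP.isExactCover.filter _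
  have hP₂two : ∀ e ∈ P₂, e.card = 2 := fun e he =>
    ((hP.1 e (mem_filter.mp he).1).resolve_left (mem_filter.mp he).2)
  have hcardU : U.card = 2 * P₂.card := by
    rw [← hP₂.sum_card, sum_congr rfl hP₂two, sum_const, smul_eq_mul, mul_comm]
  obtain ⟨N, hN, hNtwo⟩ := exists_isExactCover_card_two_of_even Uᶜ (by
    have hU_le : 2 * P₂.card ≤ n := hcardU ▸ card_le_univ U |>.trans_eq (Fintype.card_fin n)
    rw [card_compl, Fintype.card_fin, hcardU]
    exact (Nat.even_sub hU_le).mpr (iff_of_true hne (even_two_mul _)))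
  have hdisj : Disjoint P₂ N := disjoint_left.mpr fun e he₂ heN => by
    obtain ⟨x, hx⟩ := card_pos.mp (by rw [hP₂two e he₂]; norm_num : 0 < e.card)
    exact mem_compl.mp (hN.1 e heN hx) (hP₂.1 e he₂ hx)
  refine ⟨P₂ ∪ N, ?_, ?_⟩
  · refine IsExactCover.isPairing (by simpa using hP₂.union hN disjoint_compl_right) ?_
    intro e he
    rcases mem_union.mp he with he | he
    exacts [hP₂two e he, hNtwo e he]
  have hN_le : ∑ e ∈ N, blockWeight n D e ≤ ∑ x ∈ Uᶜ, D i x :=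
    hN.sum_sum (D i) ▸ sum_le_sum fun e he => blockWeight_le_sum_dist hD i (hNtwo e he)
  have hsingletons : ∑ x ∈ Uᶜ, D i x = ∑ e ∈ P with e.card = 1, ∑ a ∈ e, D i a := by
    have hsplit := sum_filter_add_sum_filter_not P (·.card = 1) (fun e => ∑ a ∈ e, D i a)
    have htotal := sum_compl_add_sum U (D i)
    rw [hP.isExactCover.sum_sum] at hsplit
    rw [← add_sum_erase _ _ (mem_univ i), hD.1 i, zero_add, ← hP₂.sum_sum] at htotal
    linarith
  rw [pairingWeight, sum_union hdisj]
  linarith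

theorem pattern_cost_ge_Di_add_DM_general (n : ℕ) (hne : Even n)
    (D : Fin n → Fin n → ℝ) (hD : isMetric n D)
    (M : Finset (Finset (Fin n)))
    (hMmin : ∀ M' : Finset (Finset (Fin n)), isPairing n M' →
      pairingWeight n D M ≤ pairingWeight n D M')
    (i : Fin n) (P : Finset (Finset (Fin n))) (hP : isPattern n i P) :
    sumDi n D i + pairingWeight n D M ≤ patternCost n D i P := by
  obtain ⟨M', hM', hweight⟩ := exists_isPairing_pairingWeight_le hne hD hP
  rw [patternCost_eq hP]
  linarith [hMmin M' hM']

/-- The cost of any TTP-2 itinerary pattern of team `i` is at least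
`D_i + D_M`, where `D_M` is the minimum weight of a pairing. -/
theorem pattern_cost_ge_Di_add_DM (n : ℕ) (hn : 4 ≤ n) (hne : Even n)
    (D : Fin n → Fin n → ℝ) (hD : isMetric n D)
    (M : Finset (Finset (Fin n))) (hM : isPairing n M)
    (hMmin : ∀ M' : Finset (Finset (Fin n)), isPairing n M' →
      pairingWeight n D M ≤ pairingWeight n D M')
    (i : Fin n) (P : Finset (Finset (Fin n))) (hP : isPattern n i P) :
    sumDi n D i + pairingWeight n D M ≤ patternCost n D i P :=
  pattern_cost_ge_Di_add_DM_general n hne D hD M hMmin i P hP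
end

section
/- In any feasible TTP-2 schedule for n teams, the travel distance of every team i is at least D_i + D_M, where D_M is the minimum weight of a pairing (perfect matching) of the n teams. -/
open Finset

lemma exists_pairing_of_even {α : Type*} [DecidableEq α] :
    ∀ s : Finset α, Even s.card →
    ∃ P : Finset (Finset α), (∀ e ∈ P, e.card = 2) ∧ (∀ e ∈ P, e ⊆ s) ∧
      (∀ x ∈ s, ∃! e, e ∈ P ∧ x ∈ e) := by
  intro s
  induction s using Finset.strongInduction with
  | _ s ih =>
    intro hs
    rcases s.eq_empty_or_nonempty with rfl | ⟨a, ha⟩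
    · exact ⟨∅, by simp, by simp, by simp⟩
    · have hcard : 2 ≤ s.card := by
        rcases hs with ⟨k, hk⟩
        have : 0 < s.card := Finset.card_pos.mpr ⟨a, ha⟩
        omega
      obtain ⟨b, hb⟩ : (s.erase a).Nonempty := by
        rw [← Finset.card_pos, Finset.card_erase_of_mem ha]; omega
      have hb' : b ∈ s := Finset.mem_of_mem_erase hb
      have hab : b ≠ a := Finset.ne_of_mem_erase hb
      have hsub : (s.erase a).erase b ⊂ s :=
        (Finset.erase_subset _ _).trans_ssubset (Finset.erase_ssubset ha)
      have hcard' : ((s.erase a).erase b).card = s.card - 2 := by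
        rw [Finset.card_erase_of_mem hb, Finset.card_erase_of_mem ha]; omega
      obtain ⟨P, h1, h2, h3⟩ := ih _ hsub (by
        rw [hcard']; rcases hs with ⟨k, hk⟩; exact ⟨k - 1, by omega⟩)
      have hmemab : ∀ x, x ∈ ({a, b} : Finset α) ↔ x = a ∨ x = b := by
        intro x; simp
      have hnotin : ∀ e ∈ P, a ∉ e ∧ b ∉ e := by
        intro e he
        constructor
        · intro hx; have := h2 e he hx
          rw [Finset.mem_erase, Finset.mem_erase] at this; tauto
        · intro hx; have := h2 e he hx
          rw [Finset.mem_erase] at this; tauto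
      refine ⟨insert {a, b} P, ?_, ?_, ?_⟩
      · intro e he
        rcases Finset.mem_insert.mp he with rfl | he'
        · rw [Finset.card_insert_of_notMem (by simp [hab.symm]), Finset.card_singleton]
        · exact h1 e he'
      · intro e he
        rcases Finset.mem_insert.mp he with rfl | he'
        · intro x hx; rcases (hmemab x).mp hx with rfl | rfl <;> assumption
        · exact (h2 e he').trans ((Finset.erase_subset _ _).trans (Finset.erase_subset _ _))
      · intro x hx
        by_cases hxx : x = a ∨ x = b
        · refine ⟨{a, b}, ⟨Finset.mem_insert_self _ _, by simp [hxx]⟩, ?_⟩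
          rintro e ⟨he, hxe⟩
          rcases Finset.mem_insert.mp he with rfl | he'
          · rfl
          · exfalso; rcases hxx with rfl | rfl
            · exact (hnotin e he').1 hxe
            · exact (hnotin e he').2 hxe
        · push_neg at hxx
          have hx' : x ∈ (s.erase a).erase b := by
            simp [Finset.mem_erase, hxx.1, hxx.2, hx]
          obtain ⟨e, ⟨heP, hxe⟩, huniq⟩ := h3 x hx'
          refine ⟨e, ⟨Finset.mem_insert_of_mem heP, hxe⟩, ?_⟩
          rintro e' ⟨he', hxe'⟩
          rcases Finset.mem_insert.mp he' with rfl | he''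
          · exfalso; rcases (hmemab x).mp hxe' with rfl | rfl <;> tauto
          · exact huniq e' ⟨he'', hxe'⟩

lemma sum_over_partition {α : Type*} [DecidableEq α] (P : Finset (Finset α)) (s : Finset α)
    (hsub : ∀ e ∈ P, e ⊆ s) (hcov : ∀ x ∈ s, ∃! e, e ∈ P ∧ x ∈ e) (f : α → ℝ) :
    ∑ e ∈ P, ∑ a ∈ e, f a = ∑ a ∈ s, f a := by
  have hdisj : (↑P : Set (Finset α)).PairwiseDisjoint id := by
    intro e he e' he' hne
    simp only [Function.onFun, id] at *
    rw [Finset.disjoint_left]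
    intro x hxe hxe'
    obtain ⟨u, _, hu⟩ := hcov x (hsub e he hxe)
    exact hne ((hu e ⟨he, hxe⟩).trans (hu e' ⟨he', hxe'⟩).symm)
  have hbu : P.biUnion id = s := by
    apply Finset.Subset.antisymm
    · intro x hx
      obtain ⟨e, he, hxe⟩ := Finset.mem_biUnion.mp hx
      exact hsub e he hxe
    · intro x hx
      obtain ⟨e, ⟨he, hxe⟩, _⟩ := hcov x hx
      exact Finset.mem_biUnion.mpr ⟨e, he, hxe⟩
  rw [← hbu, Finset.sum_biUnion hdisj]; rfl

/-- Whether team `i` is away on (ℕ-indexed) day `d`; `false` out of range. -/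
def ttpAw (n : ℕ) (loc : Fin (2*(n-1)) → Fin n → Bool) (i : Fin n) (d : ℕ) : Bool :=
  if h : d < 2*(n-1) then !(loc ⟨d, h⟩ i) else false

/-- The opponent of team `i` on (ℕ-indexed) day `d`; `i` out of range. -/
def ttpOpn (n : ℕ) (opp : Fin (2*(n-1)) → Fin n → Fin n) (i : Fin n) (d : ℕ) : Fin n :=
  if h : d < 2*(n-1) then opp ⟨d, h⟩ i else i

section basic
variable {n : ℕ} {opp : Fin (2*(n-1)) → Fin n → Fin n}
  {loc : Fin (2*(n-1)) → Fin n → Bool} {i : Fin n}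

lemma ttpAw_lt {d : ℕ} (h : ttpAw n loc i d = true) : d < 2*(n-1) := by
  by_contra hc
  rw [ttpAw, dif_neg hc] at h
  exact Bool.false_ne_true h

lemma ttpAw_false {d : ℕ} (h : ttpAw n loc i d = true) :
    ∀ hlt : d < 2*(n-1), loc ⟨d, hlt⟩ i = false := by
  intro hlt
  rw [ttpAw, dif_pos hlt] at h
  simpa using h

lemma ttpVen_eq (d : ℕ) :
    ttpVen n opp loc d i = if ttpAw n loc i d then ttpOpn n opp i d else i := by
  rw [ttpVen, ttpAw, ttpOpn]
  by_cases h : d < 2*(n-1)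
  · rw [dif_pos h, dif_pos h, dif_pos h]
    cases hl : loc ⟨d, h⟩ i <;> simp [hl]
  · rw [dif_neg h, dif_neg h]; simp

variable (hfeas : ttpFeasible n opp loc)
include hfeas

lemma ttpOpn_ne {d : ℕ} (h : ttpAw n loc i d = true) : ttpOpn n opp i d ≠ i := by
  rw [ttpOpn, dif_pos (ttpAw_lt h)]
  exact hfeas.1 _ _

lemma ttpNo3 (d : ℕ) :
    ¬(ttpAw n loc i d = true ∧ ttpAw n loc i (d+1) = true ∧ ttpAw n loc i (d+2) = true) := by
  rintro ⟨h0, h1, h2⟩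
  have hlt : d + 2 < 2*(n-1) := ttpAw_lt h2
  refine hfeas.2.2.2.2.2 d hlt i ⟨?_, ?_⟩
  · rw [ttpAw_false h1 (by omega), ttpAw_false h0 (by omega)]
  · rw [ttpAw_false h2 hlt, ttpAw_false h1 (by omega)]

lemma ttpNorep {d : ℕ} (h0 : ttpAw n loc i d = true) (h1 : ttpAw n loc i (d+1) = true) :
    ttpOpn n opp i (d+1) ≠ ttpOpn n opp i d := by
  have hlt : d + 1 < 2*(n-1) := ttpAw_lt h1
  rw [ttpOpn, ttpOpn, dif_pos hlt, dif_pos (ttpAw_lt h0)]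
  exact hfeas.2.2.2.2.1 d hlt i

lemma ttpInj {d d' : ℕ} (h : ttpAw n loc i d = true) (h' : ttpAw n loc i d' = true)
    (he : ttpOpn n opp i d = ttpOpn n opp i d') : d = d' := by
  have hlt := ttpAw_lt h
  have hlt' := ttpAw_lt h'
  rw [ttpOpn, ttpOpn, dif_pos hlt, dif_pos hlt'] at he
  obtain ⟨u, _, hu⟩ := hfeas.2.2.2.1 i (opp ⟨d, hlt⟩ i) (hfeas.1 ⟨d, hlt⟩ i).symm
  have e1 : (⟨d, hlt⟩ : Fin (2*(n-1))) = u := hu _ ⟨rfl, ttpAw_false h hlt⟩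
  have e2 : (⟨d', hlt'⟩ : Fin (2*(n-1))) = u := hu _ ⟨he.symm, ttpAw_false h' hlt'⟩
  have := e1.trans e2.symm
  exact Fin.mk.injEq d hlt d' hlt' ▸ congrArg Fin.val this

lemma ttpSurj {x : Fin n} (hx : x ≠ i) :
    ∃ d : ℕ, ttpAw n loc i d = true ∧ ttpOpn n opp i d = x := by
  obtain ⟨u, ⟨hop, hloc⟩, _⟩ := hfeas.2.2.2.1 i x (Ne.symm hx)
  refine ⟨u.val, ?_, ?_⟩
  · rw [ttpAw, dif_pos u.isLt]
    have : (⟨u.val, u.isLt⟩ : Fin (2*(n-1))) = u := rfl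
    rw [this, hloc]; rfl
  · rw [ttpOpn, dif_pos u.isLt]
    exact hop

end basic



lemma sum_filter_ite {M : Type*} [AddCommMonoid M] (s : Finset ℕ) (p c : ℕ → Prop)
    [DecidablePred p] [DecidablePred c] (f g : ℕ → M) :
    ∑ d ∈ s.filter p, (if c d then f d else g d)
      = ∑ d ∈ s.filter (fun d => p d ∧ c d), f d
        + ∑ d ∈ s.filter (fun d => p d ∧ ¬ c d), g d := by
  rw [Finset.sum_filter, Finset.sum_filter, Finset.sum_filter, ← Finset.sum_add_distrib]
  refine Finset.sum_congr rfl fun d _ => ?_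
  by_cases hp : p d <;> by_cases hc : c d <;> simp [hp, hc]

lemma sum_filter_split2 {M : Type*} [AddCommMonoid M] (s : Finset ℕ) (p q r : ℕ → Prop)
    [DecidablePred p] [DecidablePred q] [DecidablePred r]
    (h : ∀ d ∈ s, (p d ↔ q d ∨ r d) ∧ ¬(q d ∧ r d)) (f : ℕ → M) :
    ∑ d ∈ s.filter p, f d = ∑ d ∈ s.filter q, f d + ∑ d ∈ s.filter r, f d := by
  rw [Finset.sum_filter, Finset.sum_filter, Finset.sum_filter, ← Finset.sum_add_distrib]
  refine Finset.sum_congr rfl fun d hd => ?_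
  obtain ⟨h1, h2⟩ := h d hd
  by_cases hq : q d <;> by_cases hr : r d <;>
    simp [hq, hr, h1] <;> tauto

lemma sum_filter_split3 {M : Type*} [AddCommMonoid M] (s : Finset ℕ) (p q r t : ℕ → Prop)
    [DecidablePred p] [DecidablePred q] [DecidablePred r] [DecidablePred t]
    (h : ∀ d ∈ s, (p d ↔ q d ∨ r d ∨ t d) ∧ ¬(q d ∧ r d) ∧ ¬(q d ∧ t d) ∧ ¬(r d ∧ t d))
    (f : ℕ → M) :
    ∑ d ∈ s.filter p, f d
      = ∑ d ∈ s.filter q, f d + ∑ d ∈ s.filter r, f d + ∑ d ∈ s.filter t, f d := by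
  rw [Finset.sum_filter, Finset.sum_filter, Finset.sum_filter, Finset.sum_filter,
    ← Finset.sum_add_distrib, ← Finset.sum_add_distrib]
  refine Finset.sum_congr rfl fun d hd => ?_
  obtain ⟨h1, h2⟩ := h d hd
  by_cases hq : q d <;> by_cases hr : r d <;> by_cases ht : t d <;>
    simp [hq, hr, ht, h1] <;> tauto

lemma blockWeight_pair {n : ℕ} {D : Fin n → Fin n → ℝ} (hD : isMetric n D)
    {a b : Fin n} (hab : a ≠ b) : blockWeight n D {a, b} = D a b := by
  rw [blockWeight, Finset.sum_pair hab, Finset.sum_pair hab, Finset.sum_pair hab,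
    hD.1 a, hD.1 b, hD.2.2.1 b a]
  ring



lemma ttpTravel_eq_parts {n : ℕ} (hn : 4 ≤ n) {D : Fin n → Fin n → ℝ}
    {opp : Fin (2*(n-1)) → Fin n → Fin n} {loc : Fin (2*(n-1)) → Fin n → Bool}
    (hD : isMetric n D) (hfeas : ttpFeasible n opp loc) (i : Fin n) :
    ttpTravel n D opp loc i
      = (∑ d ∈ (Finset.range (2*(n-1)+1)).filter (fun d => ttpAw n loc i d = true),
           D i (ttpOpn n opp i d))
      + (∑ d ∈ (Finset.range (2*(n-1)+1)).filter (fun d => ttpAw n loc i d = true ∧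
            ttpAw n loc i (d+1) = false ∧ ¬(0 < d ∧ ttpAw n loc i (d-1) = true)),
           D i (ttpOpn n opp i d))
      + (∑ d ∈ (Finset.range (2*(n-1)+1)).filter (fun d => ttpAw n loc i d = true ∧
            ttpAw n loc i (d+1) = true),
           D (ttpOpn n opp i d) (ttpOpn n opp i (d+1))) := by
  obtain ⟨hdiag, hnn, hsym, htri⟩ := hD
  set aw : ℕ → Bool := ttpAw n loc i with haw
  set op : ℕ → Fin n := ttpOpn n opp i with hop
  have hno3 : ∀ d : ℕ, 0 < d → aw (d-1) = true → aw d = true → aw (d+1) = true → False := by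
    intro d hd h1 h2 h3
    refine ttpNo3 hfeas (d-1) ⟨h1, ?_, ?_⟩
    · rwa [show d-1+1 = d by omega]
    · rwa [show d-1+2 = d+1 by omega]
  set term : ℕ → ℝ := fun d =>
    (if aw d = true then
        (if 0 < d ∧ aw (d-1) = true then D (op (d-1)) (op d) else D i (op d))
      else 0)
    + (if aw d = false ∧ 0 < d ∧ aw (d-1) = true then D (op (d-1)) i else 0) with hterm
  -- Step 1 : travel = sum of term over range (2*(n-1)+1)
  have step1 : ttpTravel n D opp loc i = ∑ d ∈ Finset.range (2*(n-1)+1), term d := by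
    obtain ⟨m, hm⟩ : ∃ m, 2*(n-1) = m + 2 := ⟨2*(n-1)-2, by omega⟩
    have h0 : term 0 = D i (ttpVen n opp loc 0 i) := by
      simp only [hterm, ttpVen_eq, ← haw, ← hop]
      rcases Bool.eq_false_or_eq_true (aw 0) with h | h <;> simp [h, hdiag]
    have hmid : ∀ d : ℕ, D (ttpVen n opp loc d i) (ttpVen n opp loc (d+1) i) = term (d+1) := by
      intro d
      simp only [hterm, ttpVen_eq, ← haw, ← hop, Nat.add_sub_cancel]
      rcases Bool.eq_false_or_eq_true (aw d) with h1 | h1 <;>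
        rcases Bool.eq_false_or_eq_true (aw (d+1)) with h2 | h2 <;>
        simp [h1, h2, hdiag, Nat.succ_pos]
    have hT : term (m+1+1) = D (ttpVen n opp loc (m+1) i) i := by
      have hawT : aw (m+1+1) = false := by
        rw [haw, ttpAw, dif_neg (by omega)]
      simp only [hterm, ttpVen_eq, ← haw, ← hop, hawT, show m+1+1-1 = m+1 by omega]
      rcases Bool.eq_false_or_eq_true (aw (m+1)) with h1 | h1 <;>
        simp [h1, hdiag, hsym (op (m+1)) i]
    rw [ttpTravel, hm, show m+2-1 = m+1 by omega]
    conv_rhs => rw [show m+2+1 = (m+1)+1+1 by omega, Finset.sum_range_succ,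
      Finset.sum_range_succ' term (m+1)]
    rw [h0, hT]
    rw [Finset.sum_congr rfl (fun d _ => hmid d)]
    ring
  -- Step 2 : split the sum of term
  rw [step1]
  simp only [hterm]
  rw [Finset.sum_add_distrib]
  rw [← Finset.sum_filter (fun d => aw d = true)
      (fun d => if 0 < d ∧ aw (d-1) = true then D (op (d-1)) (op d) else D i (op d))]
  rw [← Finset.sum_filter (fun d => aw d = false ∧ 0 < d ∧ aw (d-1) = true)
      (fun d => D (op (d-1)) i)]
  rw [sum_filter_ite (Finset.range (2*(n-1)+1)) (fun d => aw d = true)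
      (fun d => 0 < d ∧ aw (d-1) = true)
      (fun d => D (op (d-1)) (op d)) (fun d => D i (op d))]
  -- reindex the pair-end sum to pair-starts
  have reidx1 :
      ∑ d ∈ (Finset.range (2*(n-1)+1)).filter
          (fun d => aw d = true ∧ (0 < d ∧ aw (d-1) = true)), D (op (d-1)) (op d)
        = ∑ d ∈ (Finset.range (2*(n-1)+1)).filter
          (fun d => aw d = true ∧ aw (d+1) = true), D (op d) (op (d+1)) := by
    refine Finset.sum_nbij' (fun d => d - 1) (fun d => d + 1) ?_ ?_ ?_ ?_ ?_
    · intro d hd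
      simp only [Finset.mem_filter, Finset.mem_range] at hd ⊢
      obtain ⟨hr, h1, h2, h3⟩ := hd
      exact ⟨by omega, h3, by rwa [show d-1+1 = d by omega]⟩
    · intro d hd
      simp only [Finset.mem_filter, Finset.mem_range] at hd ⊢
      obtain ⟨hr, h1, h2⟩ := hd
      have := ttpAw_lt (haw ▸ h2)
      exact ⟨by omega, h2, by omega, by rwa [Nat.add_sub_cancel]⟩
    · intro d hd
      simp only [Finset.mem_filter, Finset.mem_range] at hd
      show d - 1 + 1 = d
      omega
    · intro d _
      show d + 1 - 1 = d
      omega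
    · intro d hd
      simp only [Finset.mem_filter, Finset.mem_range] at hd
      show D (op (d-1)) (op d) = D (op (d-1)) (op (d-1+1))
      rw [show d-1+1 = d by omega]
  -- reindex the return-home sum to run-ends
  have reidx2 :
      ∑ d ∈ (Finset.range (2*(n-1)+1)).filter
          (fun d => aw d = false ∧ 0 < d ∧ aw (d-1) = true), D (op (d-1)) i
        = ∑ d ∈ (Finset.range (2*(n-1)+1)).filter
          (fun d => aw d = true ∧ aw (d+1) = false), D (op d) i := by
    refine Finset.sum_nbij' (fun d => d - 1) (fun d => d + 1) ?_ ?_ ?_ ?_ ?_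
    · intro d hd
      simp only [Finset.mem_filter, Finset.mem_range] at hd ⊢
      obtain ⟨hr, h1, h2, h3⟩ := hd
      exact ⟨by omega, h3, by rwa [show d-1+1 = d by omega]⟩
    · intro d hd
      simp only [Finset.mem_filter, Finset.mem_range] at hd ⊢
      obtain ⟨hr, h1, h2⟩ := hd
      have := ttpAw_lt (haw ▸ h1)
      exact ⟨by omega, h2, by omega, by rwa [Nat.add_sub_cancel]⟩
    · intro d hd
      simp only [Finset.mem_filter, Finset.mem_range] at hd
      show d - 1 + 1 = d
      omega
    · intro d _
      show d + 1 - 1 = d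
      omega
    · intro d hd
      rfl
  rw [reidx1, reidx2]
  -- split starts into singles and pair-starts
  have splitStart :
      ∑ d ∈ (Finset.range (2*(n-1)+1)).filter
          (fun d => aw d = true ∧ ¬(0 < d ∧ aw (d-1) = true)), D i (op d)
        = (∑ d ∈ (Finset.range (2*(n-1)+1)).filter (fun d => aw d = true ∧
              aw (d+1) = false ∧ ¬(0 < d ∧ aw (d-1) = true)), D i (op d))
          + (∑ d ∈ (Finset.range (2*(n-1)+1)).filter
              (fun d => aw d = true ∧ aw (d+1) = true), D i (op d)) := by
    refine sum_filter_split2 _ _ _ _ (fun d _ => ?_) _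
    constructor
    · constructor
      · rintro ⟨h1, h2⟩
        rcases Bool.eq_false_or_eq_true (aw (d+1)) with h3 | h3
        · exact Or.inr ⟨h1, h3⟩
        · exact Or.inl ⟨h1, h3, h2⟩
      · rintro (⟨h1, _, h2⟩ | ⟨h1, h2⟩)
        · exact ⟨h1, by assumption⟩
        · exact ⟨h1, fun hc => hno3 d hc.1 hc.2 h1 h2⟩
    · rintro ⟨⟨_, h1, _⟩, ⟨_, h2⟩⟩
      rw [h1] at h2
      exact Bool.false_ne_true h2
  -- split ends into singles and pair-ends
  have splitEnd :
      ∑ d ∈ (Finset.range (2*(n-1)+1)).filter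
          (fun d => aw d = true ∧ aw (d+1) = false), D (op d) i
        = (∑ d ∈ (Finset.range (2*(n-1)+1)).filter (fun d => aw d = true ∧
              aw (d+1) = false ∧ ¬(0 < d ∧ aw (d-1) = true)), D (op d) i)
          + (∑ d ∈ (Finset.range (2*(n-1)+1)).filter
              (fun d => aw d = true ∧ 0 < d ∧ aw (d-1) = true), D (op d) i) := by
    refine sum_filter_split2 _ _ _ _ (fun d _ => ?_) _
    constructor
    · constructor
      · rintro ⟨h1, h2⟩
        by_cases h3 : 0 < d ∧ aw (d-1) = true
        · exact Or.inr ⟨h1, h3⟩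
        · exact Or.inl ⟨h1, h2, h3⟩
      · rintro (⟨h1, h2, _⟩ | ⟨h1, h2⟩)
        · exact ⟨h1, h2⟩
        · refine ⟨h1, ?_⟩
          rcases Bool.eq_false_or_eq_true (aw (d+1)) with h3 | h3
          · exact (hno3 d h2.1 h2.2 h1 h3).elim
          · exact h3
    · rintro ⟨⟨_, _, h1⟩, ⟨_, h2⟩⟩
      exact h1 h2
  rw [splitStart, splitEnd]
  -- split all away days into singles, pair-starts, pair-ends
  have splitA :
      ∑ d ∈ (Finset.range (2*(n-1)+1)).filter (fun d => aw d = true), D i (op d)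
        = (∑ d ∈ (Finset.range (2*(n-1)+1)).filter (fun d => aw d = true ∧
              aw (d+1) = false ∧ ¬(0 < d ∧ aw (d-1) = true)), D i (op d))
          + (∑ d ∈ (Finset.range (2*(n-1)+1)).filter
              (fun d => aw d = true ∧ aw (d+1) = true), D i (op d))
          + (∑ d ∈ (Finset.range (2*(n-1)+1)).filter
              (fun d => aw d = true ∧ 0 < d ∧ aw (d-1) = true), D i (op d)) := by
    refine sum_filter_split3 _ _ _ _ _ (fun d _ => ?_) _
    refine ⟨?_, ?_, ?_, ?_⟩
    · constructor
      · intro h1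
        rcases Bool.eq_false_or_eq_true (aw (d+1)) with h3 | h3
        · exact Or.inr (Or.inl ⟨h1, h3⟩)
        · by_cases h4 : 0 < d ∧ aw (d-1) = true
          · exact Or.inr (Or.inr ⟨h1, h4⟩)
          · exact Or.inl ⟨h1, h3, h4⟩
      · rintro (⟨h1, _⟩ | ⟨h1, _⟩ | ⟨h1, _⟩) <;> exact h1
    · rintro ⟨⟨_, h1, _⟩, ⟨_, h2⟩⟩
      rw [h1] at h2
      exact Bool.false_ne_true h2
    · rintro ⟨⟨_, _, h1⟩, ⟨_, h2⟩⟩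
      exact h1 h2
    · rintro ⟨⟨h1, h2⟩, ⟨_, h3⟩⟩
      exact hno3 d h3.1 h3.2 h1 h2
  rw [splitA]
  -- symmetrize the two end sums
  have symm1 :
      ∑ d ∈ (Finset.range (2*(n-1)+1)).filter (fun d => aw d = true ∧
          aw (d+1) = false ∧ ¬(0 < d ∧ aw (d-1) = true)), D (op d) i
        = ∑ d ∈ (Finset.range (2*(n-1)+1)).filter (fun d => aw d = true ∧
          aw (d+1) = false ∧ ¬(0 < d ∧ aw (d-1) = true)), D i (op d) :=
    Finset.sum_congr rfl (fun d _ => hsym (op d) i)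
  have symm2 :
      ∑ d ∈ (Finset.range (2*(n-1)+1)).filter
          (fun d => aw d = true ∧ 0 < d ∧ aw (d-1) = true), D (op d) i
        = ∑ d ∈ (Finset.range (2*(n-1)+1)).filter
          (fun d => aw d = true ∧ 0 < d ∧ aw (d-1) = true), D i (op d) :=
    Finset.sum_congr rfl (fun d _ => hsym (op d) i)
  rw [symm1, symm2]
  ring

/-- In any feasible TTP-2 schedule, the travel distance of every team `i` is at
least `D_i + D_M`, where `D_M` is the minimum weight of a pairing. -/
theorem travel_ge_Di_add_DM (n : ℕ) (hn : 4 ≤ n) (hne : Even n)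
    (D : Fin n → Fin n → ℝ) (hD : isMetric n D)
    (M : Finset (Finset (Fin n))) (hM : isPairing n M)
    (hMmin : ∀ M' : Finset (Finset (Fin n)), isPairing n M' →
      pairingWeight n D M ≤ pairingWeight n D M')
    (opp : Fin (2*(n-1)) → Fin n → Fin n) (loc : Fin (2*(n-1)) → Fin n → Bool)
    (hfeas : ttpFeasible n opp loc) (i : Fin n) :
    sumDi n D i + pairingWeight n D M ≤ ttpTravel n D opp loc i := by
  have hDm := hD
  obtain ⟨hdiag, hnn, hsym, htri⟩ := hDm
  rw [ttpTravel_eq_parts hn hD hfeas i]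
  set aw : ℕ → Bool := ttpAw n loc i with haw
  set op : ℕ → Fin n := ttpOpn n opp i with hop
  set A := (Finset.range (2*(n-1)+1)).filter (fun d => aw d = true) with hA
  set Sg := (Finset.range (2*(n-1)+1)).filter (fun d => aw d = true ∧
      aw (d+1) = false ∧ ¬(0 < d ∧ aw (d-1) = true)) with hSg
  set PS := (Finset.range (2*(n-1)+1)).filter
      (fun d => aw d = true ∧ aw (d+1) = true) with hPS
  set PE := (Finset.range (2*(n-1)+1)).filter
      (fun d => aw d = true ∧ 0 < d ∧ aw (d-1) = true) with hPE
  have hno3 : ∀ d : ℕ, 0 < d → aw (d-1) = true → aw d = true → aw (d+1) = true → False := by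
    intro d hd h1 h2 h3
    refine ttpNo3 hfeas (d-1) ⟨h1, ?_, ?_⟩
    · rwa [show d-1+1 = d by omega]
    · rwa [show d-1+2 = d+1 by omega]
  have hawlt : ∀ d, aw d = true → d < 2*(n-1) := fun d h => ttpAw_lt h
  have hopne : ∀ d, aw d = true → op d ≠ i := fun d h => ttpOpn_ne hfeas h
  have hinj : ∀ d d', aw d = true → aw d' = true → op d = op d' → d = d' :=
    fun d d' h h' he => ttpInj hfeas h h' he
  have hsurj : ∀ x : Fin n, x ≠ i → ∃ d, aw d = true ∧ op d = x :=
    fun x hx => ttpSurj hfeas hx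
  have hmemA : ∀ d, d ∈ A ↔ aw d = true := by
    intro d
    rw [hA, Finset.mem_filter, Finset.mem_range]
    exact ⟨fun h => h.2, fun h => ⟨by have := hawlt d h; omega, h⟩⟩
  have hmemSg : ∀ d, d ∈ Sg ↔ aw d = true ∧ aw (d+1) = false ∧ ¬(0 < d ∧ aw (d-1) = true) := by
    intro d
    rw [hSg, Finset.mem_filter, Finset.mem_range]
    exact ⟨fun h => h.2, fun h => ⟨by have := hawlt d h.1; omega, h⟩⟩
  have hmemPS : ∀ d, d ∈ PS ↔ aw d = true ∧ aw (d+1) = true := by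
    intro d
    rw [hPS, Finset.mem_filter, Finset.mem_range]
    exact ⟨fun h => h.2, fun h => ⟨by have := hawlt d h.1; omega, h⟩⟩
  have hmemPE : ∀ d, d ∈ PE ↔ aw d = true ∧ 0 < d ∧ aw (d-1) = true := by
    intro d
    rw [hPE, Finset.mem_filter, Finset.mem_range]
    exact ⟨fun h => h.2, fun h => ⟨by have := hawlt d h.1; omega, h⟩⟩
  -- the away sum equals sumDi
  have hS1 : ∑ d ∈ A, D i (op d) = sumDi n D i := by
    rw [sumDi]
    refine Finset.sum_bij (fun d _ => op d) ?_ ?_ ?_ ?_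
    · intro d hd
      exact Finset.mem_erase.mpr ⟨hopne d ((hmemA d).mp hd), Finset.mem_univ _⟩
    · intro d1 h1 d2 h2 he
      exact hinj d1 d2 ((hmemA d1).mp h1) ((hmemA d2).mp h2) he
    · intro x hx
      obtain ⟨d, hd1, hd2⟩ := hsurj x (Finset.mem_erase.mp hx).1
      exact ⟨d, (hmemA d).mpr hd1, hd2⟩
    · intro d hd
      rfl
  -- cardinalities
  have hcardA : A.card = n - 1 := by
    have hbij : A.card = (Finset.univ.erase i).card := by
      refine Finset.card_bij (fun d _ => op d) ?_ ?_ ?_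
      · intro d hd
        exact Finset.mem_erase.mpr ⟨hopne d ((hmemA d).mp hd), Finset.mem_univ _⟩
      · intro d1 h1 d2 h2 he
        exact hinj d1 d2 ((hmemA d1).mp h1) ((hmemA d2).mp h2) he
      · intro x hx
        obtain ⟨d, hd1, hd2⟩ := hsurj x (Finset.mem_erase.mp hx).1
        exact ⟨d, (hmemA d).mpr hd1, hd2⟩
    rw [hbij, Finset.card_erase_of_mem (Finset.mem_univ i), Finset.card_univ,
      Fintype.card_fin]
  have hsplitn : A.card = Sg.card + PS.card + PE.card := by
    have h3 := sum_filter_split3 (Finset.range (2*(n-1)+1)) (fun d => aw d = true)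
      (fun d => aw d = true ∧ aw (d+1) = false ∧ ¬(0 < d ∧ aw (d-1) = true))
      (fun d => aw d = true ∧ aw (d+1) = true)
      (fun d => aw d = true ∧ 0 < d ∧ aw (d-1) = true)
      (fun d _ => by
        refine ⟨?_, ?_, ?_, ?_⟩
        · constructor
          · intro h1
            rcases Bool.eq_false_or_eq_true (aw (d+1)) with h3 | h3
            · exact Or.inr (Or.inl ⟨h1, h3⟩)
            · by_cases h4 : 0 < d ∧ aw (d-1) = true
              · exact Or.inr (Or.inr ⟨h1, h4⟩)
              · exact Or.inl ⟨h1, h3, h4⟩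
          · rintro (⟨h1, _⟩ | ⟨h1, _⟩ | ⟨h1, _⟩) <;> exact h1
        · rintro ⟨⟨_, h1, _⟩, ⟨_, h2⟩⟩
          rw [h1] at h2
          exact Bool.false_ne_true h2
        · rintro ⟨⟨_, _, h1⟩, ⟨_, h2⟩⟩
          exact h1 h2
        · rintro ⟨⟨h1, h2⟩, ⟨_, h3⟩⟩
          exact hno3 d h3.1 h3.2 h1 h2)
      (fun _ => (1:ℕ))
    rw [← hA, ← hSg, ← hPS, ← hPE] at h3
    rw [Finset.card_eq_sum_ones A, h3, ← Finset.card_eq_sum_ones Sg,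
      ← Finset.card_eq_sum_ones PS, ← Finset.card_eq_sum_ones PE]
  have hPSPE : PS.card = PE.card := by
    refine Finset.card_nbij' (fun d => d + 1) (fun d => d - 1) ?_ ?_ ?_ ?_
    · intro d hd
      obtain ⟨h1, h2⟩ := (hmemPS d).mp hd
      refine (hmemPE (d+1)).mpr ⟨h2, by omega, by rwa [Nat.add_sub_cancel]⟩
    · intro d hd
      obtain ⟨h1, h2, h3⟩ := (hmemPE d).mp hd
      refine (hmemPS (d-1)).mpr ⟨h3, by rwa [show d-1+1 = d by omega]⟩
    · intro d _
      show d + 1 - 1 = d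
      omega
    · intro d hd
      obtain ⟨h1, h2, h3⟩ := (hmemPE d).mp hd
      show d - 1 + 1 = d
      omega
  -- the singles + home vertex set
  set sS := Sg.image op with hsS
  have hinjSg : ∀ x ∈ Sg, ∀ y ∈ Sg, op x = op y → x = y :=
    fun x hx y hy he => hinj x y ((hmemSg x).mp hx).1 ((hmemSg y).mp hy).1 he
  have hinotsS : i ∉ sS := by
    intro h
    obtain ⟨d, hd, hdi⟩ := Finset.mem_image.mp h
    exact hopne d ((hmemSg d).mp hd).1 hdi
  have hcards0 : (insert i sS).card = Sg.card + 1 := by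
    rw [Finset.card_insert_of_notMem hinotsS, Finset.card_image_of_injOn hinjSg]
  have hEven : Even (insert i sS).card := by
    rw [hcards0, Nat.even_iff]
    have h1 : n % 2 = 0 := Nat.even_iff.mp hne
    omega
  obtain ⟨R, hR1, hR2, hR3⟩ := exists_pairing_of_even (insert i sS) hEven
  set Q := PS.image (fun d => ({op d, op (d+1)} : Finset (Fin n))) with hQ
  have hne2 : ∀ d ∈ PS, op d ≠ op (d+1) := by
    intro d hd
    obtain ⟨h1, h2⟩ := (hmemPS d).mp hd
    exact (ttpNorep hfeas h1 h2).symm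
  have hQmem : ∀ e ∈ Q, ∃ d, d ∈ PS ∧ e = ({op d, op (d+1)} : Finset (Fin n)) := by
    intro e he
    obtain ⟨d, hd, hde⟩ := Finset.mem_image.mp he
    exact ⟨d, hd, hde.symm⟩
  -- a PS-index collision forces equality
  have hPScol : ∀ d ∈ PS, ∀ d' ∈ PS, ∀ x : Fin n,
      (x = op d ∨ x = op (d+1)) → (x = op d' ∨ x = op (d'+1)) → d = d' := by
    intro d hd d' hd' x hx hx'
    obtain ⟨ha1, ha2⟩ := (hmemPS d).mp hd
    obtain ⟨hb1, hb2⟩ := (hmemPS d').mp hd'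
    rcases hx with rfl | rfl <;> rcases hx' with he | he
    · exact hinj d d' ha1 hb1 he
    · -- op d = op (d'+1) : d = d'+1, three aways in a row at d'
      have hdd : d = d' + 1 := hinj d (d'+1) ha1 hb2 he
      exact absurd (hno3 (d'+1) (by omega)
        (by rwa [Nat.add_sub_cancel]) (hdd ▸ ha1) (hdd ▸ ha2)) not_false
    · -- op (d+1) = op d' : d' = d+1
      have hdd : d' = d + 1 := (hinj (d+1) d' ha2 hb1 he).symm
      exact absurd (hno3 (d+1) (by omega)
        (by rwa [Nat.add_sub_cancel]) (hdd ▸ hb1) (hdd ▸ hb2)) not_false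
    · have : d + 1 = d' + 1 := hinj (d+1) (d'+1) ha2 hb2 he
      omega
  -- elements of Q-blocks never lie in insert i sS
  have hblockdisj : ∀ x ∈ insert i sS, ∀ e ∈ Q, x ∉ e := by
    intro x hx e he hxe
    obtain ⟨d, hdPS, rfl⟩ := hQmem e he
    obtain ⟨ha1, ha2⟩ := (hmemPS d).mp hdPS
    have hxval : x = op d ∨ x = op (d+1) := by
      rcases Finset.mem_insert.mp hxe with h | h
      · exact Or.inl h
      · exact Or.inr (Finset.mem_singleton.mp h)
    rcases Finset.mem_insert.mp hx with rfl | hxS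
    · rcases hxval with h | h
      · exact hopne d ha1 h.symm
      · exact hopne (d+1) ha2 h.symm
    · obtain ⟨d'', hd''Sg, heq⟩ := Finset.mem_image.mp hxS
      obtain ⟨hc1, hc2, hc3⟩ := (hmemSg d'').mp hd''Sg
      rcases hxval with h | h
      · have : d'' = d := hinj d'' d hc1 ha1 (heq.trans h)
        rw [this] at hc2
        rw [hc2] at ha2
        exact Bool.false_ne_true ha2
      · have hdd : d'' = d + 1 := hinj d'' (d+1) hc1 ha2 (heq.trans h)
        exact hc3 ⟨by omega, by rw [hdd, Nat.add_sub_cancel]; exact ha1⟩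
  have hQR : Disjoint Q R := by
    rw [Finset.disjoint_left]
    intro e heQ heR
    obtain ⟨d, hdPS, rfl⟩ := hQmem e heQ
    have hxe : op d ∈ ({op d, op (d+1)} : Finset (Fin n)) := Finset.mem_insert_self _ _
    exact hblockdisj (op d) (hR2 _ heR hxe) _ heQ hxe
  -- Q ∪ R is a pairing
  have hpair : isPairing n (Q ∪ R) := by
    constructor
    · intro e he
      rcases Finset.mem_union.mp he with heQ | heR
      · obtain ⟨d, hdPS, rfl⟩ := hQmem e heQ
        exact Finset.card_pair (hne2 d hdPS)
      · exact hR1 e heR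
    · intro x
      by_cases hx : x ∈ insert i sS
      · obtain ⟨e, ⟨heR, hxe⟩, huniq⟩ := hR3 x hx
        refine ⟨e, ⟨Finset.mem_union_right _ heR, hxe⟩, ?_⟩
        rintro e' ⟨he', hxe'⟩
        rcases Finset.mem_union.mp he' with heQ' | heR'
        · exact absurd hxe' (hblockdisj x hx e' heQ')
        · exact huniq e' ⟨heR', hxe'⟩
      · have hxi : x ≠ i := fun h => hx (h ▸ Finset.mem_insert_self i sS)
        obtain ⟨d0, hawd0, hopd0⟩ := hsurj x hxi
        have hxnotSg : ∀ d'', d'' ∈ Sg → op d'' ≠ x := fun d'' hd'' he =>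
          hx (Finset.mem_insert_of_mem (Finset.mem_image.mpr ⟨d'', hd'', he⟩))
        have hex : ∃ dps, dps ∈ PS ∧ (x = op dps ∨ x = op (dps+1)) := by
          rcases Bool.eq_false_or_eq_true (aw (d0+1)) with h3 | h3
          · exact ⟨d0, (hmemPS d0).mpr ⟨hawd0, h3⟩, Or.inl hopd0.symm⟩
          · by_cases h4 : 0 < d0 ∧ aw (d0-1) = true
            · refine ⟨d0-1, (hmemPS (d0-1)).mpr ⟨h4.2, ?_⟩, Or.inr ?_⟩
              · rwa [show d0-1+1 = d0 by omega]
              · rw [show d0-1+1 = d0 by omega]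
                exact hopd0.symm
            · exact absurd hopd0 (hxnotSg d0 ((hmemSg d0).mpr ⟨hawd0, h3, h4⟩))
        obtain ⟨dps, hdps, hxor⟩ := hex
        have hxmem : x ∈ ({op dps, op (dps+1)} : Finset (Fin n)) := by
          rcases hxor with rfl | rfl
          · exact Finset.mem_insert_self _ _
          · exact Finset.mem_insert_of_mem (Finset.mem_singleton_self _)
        refine ⟨{op dps, op (dps+1)},
          ⟨Finset.mem_union_left _ (Finset.mem_image_of_mem _ hdps), hxmem⟩, ?_⟩
        rintro e' ⟨he', hxe'⟩
        rcases Finset.mem_union.mp he' with heQ' | heR'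
        · obtain ⟨d', hd'PS, rfl⟩ := hQmem e' heQ'
          have hx'val : x = op d' ∨ x = op (d'+1) := by
            rcases Finset.mem_insert.mp hxe' with h | h
            · exact Or.inl h
            · exact Or.inr (Finset.mem_singleton.mp h)
          rw [hPScol d' hd'PS dps hdps x hx'val hxor]
        · exact absurd (hR2 e' heR' hxe') hx
  -- the weight of Q
  have hQinj : ∀ d ∈ PS, ∀ d' ∈ PS,
      ({op d, op (d+1)} : Finset (Fin n)) = {op d', op (d'+1)} → d = d' := by
    intro d hd d' hd' he
    have hxe : op d ∈ ({op d', op (d'+1)} : Finset (Fin n)) := by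
      rw [← he]
      exact Finset.mem_insert_self _ _
    have : op d = op d' ∨ op d = op (d'+1) := by
      rcases Finset.mem_insert.mp hxe with h | h
      · exact Or.inl h
      · exact Or.inr (Finset.mem_singleton.mp h)
    exact hPScol d hd d' hd' (op d) (Or.inl rfl) this
  have hsumQ : ∑ e ∈ Q, blockWeight n D e = ∑ d ∈ PS, D (op d) (op (d+1)) := by
    rw [hQ, Finset.sum_image hQinj]
    exact Finset.sum_congr rfl fun d hd => blockWeight_pair hD (hne2 d hd)
  -- the weight of R
  have hsumR : ∑ e ∈ R, blockWeight n D e ≤ ∑ d ∈ Sg, D i (op d) := by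
    calc ∑ e ∈ R, blockWeight n D e ≤ ∑ e ∈ R, ∑ a ∈ e, D i a := by
          refine Finset.sum_le_sum fun e he => ?_
          obtain ⟨a, b, hab, rfl⟩ := Finset.card_eq_two.mp (hR1 e he)
          rw [blockWeight_pair hD hab, Finset.sum_pair hab]
          calc D a b ≤ D a i + D i b := htri a b i
            _ = D i a + D i b := by rw [hsym a i]
      _ = ∑ a ∈ insert i sS, D i a := sum_over_partition R (insert i sS) hR2 hR3 _
      _ = D i i + ∑ a ∈ sS, D i a := Finset.sum_insert hinotsS
      _ = ∑ a ∈ sS, D i a := by rw [hdiag]; ring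
      _ = ∑ d ∈ Sg, D i (op d) := by rw [hsS, Finset.sum_image hinjSg]
  -- conclude
  have hMle : pairingWeight n D M ≤ ∑ d ∈ Sg, D i (op d) + ∑ d ∈ PS, D (op d) (op (d+1)) := by
    have h1 : pairingWeight n D M ≤ pairingWeight n D (Q ∪ R) := hMmin _ hpair
    have h2 : pairingWeight n D (Q ∪ R)
        = ∑ e ∈ Q, blockWeight n D e + ∑ e ∈ R, blockWeight n D e := by
      rw [pairingWeight, Finset.sum_union hQR]
    rw [h2, hsumQ] at h1
    linarith [hsumR]
  linarith [hS1, hMle]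
end

section
/- Any feasible schedule for TTP-2 is a 2-approximation: for any two feasible TTP-2 schedules S and S' for the same n teams and distance matrix D, the total distance of S is at most twice the total distance of S'. -/
open Finset

/-- Sum of distances from `i` to its venue over all days equals `sumDi`. -/
lemma ttp_sum_ven (n : ℕ) (D : Fin n → Fin n → ℝ) (hD : isMetric n D)
    (opp : Fin (2*(n-1)) → Fin n → Fin n) (loc : Fin (2*(n-1)) → Fin n → Bool)
    (hfeas : ttpFeasible n opp loc) (i : Fin n) :
    ∑ k ∈ Finset.range (2*(n-1)), D i (ttpVen n opp loc k i) = sumDi n D i := by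
  obtain ⟨h1, h2, h3, h4, h5, h6⟩ := hfeas
  rw [← Fin.sum_univ_eq_sum_range (fun k => D i (ttpVen n opp loc k i)) (2*(n-1))]
  have step : ∀ d : Fin (2*(n-1)), D i (ttpVen n opp loc d i)
      = if loc d i = false then D i (opp d i) else 0 := by
    intro d
    simp only [ttpVen, d.isLt, dif_pos, Fin.eta]
    cases hld : loc d i <;> simp [hD.1]
  rw [Finset.sum_congr rfl (fun d _ => step d), ← Finset.sum_filter]
  unfold sumDi
  apply Finset.sum_bij (fun d _ => opp d i)
  · intro d hd; exact Finset.mem_erase.2 ⟨h1 d i, Finset.mem_univ _⟩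
  · intro d1 hd1 d2 hd2 heq
    simp only [Finset.mem_filter] at hd1 hd2
    obtain ⟨dd, -, hu⟩ := h4 i (opp d1 i) (Ne.symm (h1 d1 i))
    exact (hu d1 ⟨rfl, hd1.2⟩).trans (hu d2 ⟨heq.symm, hd2.2⟩).symm
  · intro j hj
    obtain ⟨d, ⟨hdo, hdl⟩, -⟩ := h4 i j (Ne.symm (Finset.mem_erase.1 hj).1)
    exact ⟨d, Finset.mem_filter.2 ⟨Finset.mem_univ _, hdl⟩, hdo⟩
  · intro d hd; rfl

/-- Upper bound: the travel of a team is at most twice the sum of its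
distances to all other teams. -/
lemma ttp_upper (n : ℕ) (hn : 4 ≤ n) (D : Fin n → Fin n → ℝ) (hD : isMetric n D)
    (opp : Fin (2*(n-1)) → Fin n → Fin n) (loc : Fin (2*(n-1)) → Fin n → Bool)
    (hfeas : ttpFeasible n opp loc) (i : Fin n) :
    ttpTravel n D opp loc i ≤ 2 * sumDi n D i := by
  have hm : 1 ≤ (2*(n-1)) := by omega
  set v : ℕ → Fin n := fun d => ttpVen n opp loc d i with hv
  have hsum' : ∑ d ∈ Finset.range (2*(n-1)), D i (v d) = sumDi n D i :=
    ttp_sum_ven n D hD opp loc hfeas i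
  obtain ⟨hD0, hDnn, hDsymm, hDtri⟩ := hD
  have h1 : ttpTravel n D opp loc i ≤ D i (v 0)
      + (∑ d ∈ Finset.range ((2*(n-1))-1), (D (v d) i + D i (v (d+1)))) + D (v ((2*(n-1))-1)) i := by
    refine add_le_add (add_le_add le_rfl (Finset.sum_le_sum fun d _ => ?_)) le_rfl
    exact hDtri (v d) (v (d+1)) i
  have e1 : ∑ d ∈ Finset.range ((2*(n-1))-1), (D (v d) i + D i (v (d+1)))
      = (∑ d ∈ Finset.range ((2*(n-1))-1), D (v d) i)
      + ∑ d ∈ Finset.range ((2*(n-1))-1), D i (v (d+1)) := Finset.sum_add_distrib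
  have hm' : 2*(n-1) = (2*(n-1)-1)+1 := by omega
  have e2 : (∑ d ∈ Finset.range ((2*(n-1))-1), D (v d) i) + D (v ((2*(n-1))-1)) i
      = ∑ d ∈ Finset.range (2*(n-1)), D (v d) i := by
    conv_rhs => rw [hm']
    rw [Finset.sum_range_succ]
  have e3 : D i (v 0) + ∑ d ∈ Finset.range ((2*(n-1))-1), D i (v (d+1))
      = ∑ d ∈ Finset.range (2*(n-1)), D i (v d) := by
    conv_rhs => rw [hm']
    rw [Finset.sum_range_succ']
    ring
  have e4 : ∑ d ∈ Finset.range (2*(n-1)), D (v d) i = ∑ d ∈ Finset.range (2*(n-1)), D i (v d) :=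
    Finset.sum_congr rfl fun d _ => hDsymm (v d) i
  linarith

/-- Lower bound: the travel of a team is at least the sum of its distances to
all other teams. -/
lemma ttp_lower (n : ℕ) (hn : 4 ≤ n) (D : Fin n → Fin n → ℝ) (hD : isMetric n D)
    (opp : Fin (2*(n-1)) → Fin n → Fin n) (loc : Fin (2*(n-1)) → Fin n → Bool)
    (hfeas : ttpFeasible n opp loc) (i : Fin n) :
    sumDi n D i ≤ ttpTravel n D opp loc i := by
  have hm : 1 ≤ (2*(n-1)) := by omega
  set v : ℕ → Fin n := fun d => ttpVen n opp loc d i with hv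
  have hsum : ∑ d ∈ Finset.range (2*(n-1)), D i (v d) = sumDi n D i :=
    ttp_sum_ven n D hD opp loc hfeas i
  obtain ⟨hD0, hDnn, hDsymm, hDtri⟩ := hD
  obtain ⟨h1, h2, h3, h4, h5, h6⟩ := hfeas
  set b : ℕ → Bool := fun d => if h : d < (2*(n-1)) then loc ⟨d, h⟩ i else true with hb
  have fhome : ∀ d, b d = true → v d = i := by
    intro d hd
    by_cases h : d < (2*(n-1))
    · simp only [hb, dif_pos h] at hd
      simp [hv, ttpVen, h, hd]
    · simp [hv, ttpVen, h]
  have f3 : ∀ d, d + 2 < (2*(n-1)) → b d = false → b (d+1) = false → b (d+2) = false → False := by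
    intro d hd2 hb0 hb1 hb2'
    have hd0 : d < (2*(n-1)) := by omega
    have hd1 : d + 1 < (2*(n-1)) := by omega
    simp only [hb, dif_pos hd0, dif_pos hd1, dif_pos hd2] at hb0 hb1 hb2'
    exact h6 d hd2 i ⟨hb1.trans hb0.symm, hb2'.trans hb1.symm⟩
  set S : ℕ → ℝ := fun d => ∑ k ∈ Finset.range d, D i (v k) with hS
  set C : ℕ → ℝ := fun d => D i (v 0) + ∑ k ∈ Finset.range d, D (v k) (v (k+1)) with hC
  have SS : ∀ d, S (d+1) = S d + D i (v d) := fun d => Finset.sum_range_succ _ d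
  have CC : ∀ d, C (d+1) = C d + D (v d) (v (d+1)) := by
    intro d
    simp only [hC, Finset.sum_range_succ]
    ring
  have inv : ∀ d, d < (2*(n-1)) → S (d+1) ≤ C d
      ∨ (S (d+1) ≤ C d + D i (v d) ∧ b d = false ∧ 1 ≤ d ∧ b (d-1) = false) := by
    intro d
    induction d with
    | zero =>
      intro _
      left
      have : S 1 = D i (v 0) := by simp [hS]
      have hc : C 0 = D i (v 0) := by simp [hC]
      rw [this, hc]
    | succ d ih =>
      intro hd1
      have hdm : d < (2*(n-1)) := by omega
      rcases ih hdm with h | ⟨h, hbd, hd1', hbprev⟩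
      · cases hbd1 : b (d+1) with
        | true =>
          left
          have hvd1 : v (d+1) = i := fhome _ hbd1
          rw [SS, CC, hvd1, hD0]
          have := hDnn (v d) i
          linarith
        | false =>
          cases hbd : b d with
          | true =>
            left
            have hvd : v d = i := fhome _ hbd
            rw [SS, CC, hvd]
            linarith
          | false =>
            right
            refine ⟨?_, rfl, by omega, by simpa using hbd⟩
            rw [SS, CC]
            have := hDnn (v d) (v (d+1))
            linarith
      · have hbd1 : b (d+1) = true := by
          by_contra hc
          have hc' : b (d+1) = false := by
            cases hcc : b (d+1)
            · rfl
            · exact absurd hcc hc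
          have e1 : d - 1 + 1 = d := by omega
          have e2 : d - 1 + 2 = d + 1 := by omega
          refine f3 (d-1) (by omega) hbprev ?_ ?_
          · rw [e1]; exact hbd
          · rw [e2]; exact hc'
        left
        have hvd1 : v (d+1) = i := fhome _ hbd1
        rw [SS, CC, hvd1, hD0]
        have hsymm : D (v d) i = D i (v d) := hDsymm _ _
        linarith
  have trav : ttpTravel n D opp loc i = C ((2*(n-1))-1) + D (v ((2*(n-1))-1)) i := by
    simp only [ttpTravel, hC, hv]
  have hSm : S (2*(n-1)) = sumDi n D i := hsum
  rcases inv ((2*(n-1))-1) (by omega) with h | ⟨h, -, -, -⟩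
  · rw [Nat.sub_add_cancel hm] at h
    have := hDnn (v ((2*(n-1))-1)) i
    rw [trav]
    linarith [hSm ▸ h]
  · rw [Nat.sub_add_cancel hm] at h
    have hsymm : D i (v ((2*(n-1))-1)) = D (v ((2*(n-1))-1)) i := hDsymm _ _
    rw [trav]
    linarith [hSm ▸ h]

/-- Any feasible TTP-2 schedule is a 2-approximation: its total distance is at
most twice the total distance of any other feasible TTP-2 schedule. -/
theorem feasible_is_two_approximation (n : ℕ) (hn : 4 ≤ n) (hne : Even n)
    (D : Fin n → Fin n → ℝ) (hD : isMetric n D)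
    (opp : Fin (2*(n-1)) → Fin n → Fin n) (loc : Fin (2*(n-1)) → Fin n → Bool)
    (hfeas : ttpFeasible n opp loc)
    (opp' : Fin (2*(n-1)) → Fin n → Fin n) (loc' : Fin (2*(n-1)) → Fin n → Bool)
    (hfeas' : ttpFeasible n opp' loc') :
    ttpTotal n D opp loc ≤ 2 * ttpTotal n D opp' loc' := by
  unfold ttpTotal
  calc ∑ i : Fin n, ttpTravel n D opp loc i
      ≤ ∑ i : Fin n, 2 * sumDi n D i :=
        Finset.sum_le_sum fun i _ => ttp_upper n hn D hD opp loc hfeas i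
    _ = 2 * ∑ i : Fin n, sumDi n D i := by rw [Finset.mul_sum]
    _ ≤ 2 * ∑ i : Fin n, ttpTravel n D opp' loc' i := by
        have := Finset.sum_le_sum (fun i (_ : i ∈ Finset.univ) =>
          ttp_lower n hn D hD opp' loc' hfeas' i)
        linarith
end

section
/- For every natural number n with n ≥ 10 and n ≡ 2 (mod 4), there exists a feasible TTP-2 schedule for n teams. -/
open Finset

namespace TTPAux


def opp1 (m d i : ℕ) : ℕ :=
  if i = m then d else if d = i then m else (2 * d + (m - i)) % m

def loc1 (m d i : ℕ) : Bool :=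
  if i = m then decide (d % 2 = 1)
  else if d = i then decide (i % 2 = 0)
  else if d < i then decide ((i + d) % 2 = 0)
  else decide ((i + d) % 2 = 1)

def orig (m d : ℕ) : ℕ := if d < m then d else (d + 1) % m

theorem orig_lt {m d : ℕ} (hm : 0 < m) : orig m d < m := by
  unfold orig; split
  · assumption
  · exact Nat.mod_lt _ hm

theorem cancel2 {m a b : ℕ} (hodd : m % 2 = 1) (h : 2 * a ≡ 2 * b [MOD m]) :
    a % m = b % m := by
  have hc : Nat.Coprime m 2 := Nat.coprime_two_right.mpr (Nat.odd_iff.mpr hodd)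
  exact Nat.ModEq.cancel_left_of_coprime hc h

/-- Central characterization of the circle-method matching. -/
theorem meet_iff {m d i j : ℕ} (hi : i < m) (hj : j < m) :
    (2 * d + (m - i)) % m = j ↔ (i + j) % m = (2 * d) % m := by
  constructor
  · intro h
    have h1 : i + j ≡ i + (2 * d + (m - i)) [MOD m] :=
      Nat.ModEq.add_left i (h ▸ (Nat.mod_modEq _ m))
    have e : i + (2 * d + (m - i)) = 2 * d + m := by omega
    rw [e] at h1
    have h2 : (2 * d + m) % m = (2 * d) % m := Nat.add_mod_right _ _
    have h3 : (i + j) % m = (2 * d + m) % m := h1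
    rw [h2] at h3
    exact h3
  · intro h
    have h1 : 2 * d + (m - i) ≡ (i + j) + (m - i) [MOD m] :=
      Nat.ModEq.add_right (m - i) (Nat.ModEq.symm h)
    have e : (i + j) + (m - i) = j + m := by omega
    rw [e] at h1
    have h2 : (j + m) % m = j % m := Nat.add_mod_right _ _
    have h3 : (2 * d + (m - i)) % m = (j + m) % m := h1
    rw [h2, Nat.mod_eq_of_lt hj] at h3
    exact h3

theorem opp1_lt {m d i : ℕ} (hm : 0 < m) (hd : d < m) (hi : i < m + 1) :
    opp1 m d i < m + 1 := by
  unfold opp1; split_ifs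
  · omega
  · omega
  · have := Nat.mod_lt (2 * d + (m - i)) hm
    omega

theorem opp1_ne {m d i : ℕ} (hodd : m % 2 = 1) (hd : d < m) (hi : i < m + 1) :
    opp1 m d i ≠ i := by
  unfold opp1; split_ifs with h1 h2
  · omega
  · omega
  · intro h
    have hi' : i < m := by omega
    have h3 := (meet_iff hi' hi').mp h
    have e : i + i = 2 * i := by ring
    rw [e] at h3
    have := cancel2 hodd (Nat.ModEq.symm h3)
    rw [Nat.mod_eq_of_lt hd, Nat.mod_eq_of_lt hi'] at this
    omega

/-- In the main case, the opponent is distinct from `d` (who plays `m`). -/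
theorem opp1_main_ne_d {m d i : ℕ} (hodd : m % 2 = 1) (hd : d < m) (hi : i < m)
    (hdi : d ≠ i) : (2 * d + (m - i)) % m ≠ d := by
  intro h
  have h3 := (meet_iff hi hd).mp h
  have h4 : i + d ≡ d + d [MOD m] := by
    have : (d + d) % m = (2 * d) % m := by ring_nf
    exact h3.trans this.symm
  have h5 : i ≡ d [MOD m] := Nat.ModEq.add_right_cancel' d h4
  have : i % m = d % m := h5
  rw [Nat.mod_eq_of_lt hd, Nat.mod_eq_of_lt hi] at this
  omega

theorem opp1_invol {m d i : ℕ} (hodd : m % 2 = 1) (hd : d < m) (hi : i < m + 1) :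
    opp1 m d (opp1 m d i) = i := by
  by_cases h1 : i = m
  · rw [h1]; unfold opp1
    rw [if_pos rfl, if_neg (by omega), if_pos rfl]
  · by_cases h2 : d = i
    · unfold opp1
      rw [if_neg h1, if_pos h2, if_pos rfl]
      omega
    · have hi' : i < m := by omega
      unfold opp1
      rw [if_neg h1, if_neg h2]
      set j := (2 * d + (m - i)) % m with hj
      have hjlt : j < m := Nat.mod_lt _ (by omega)
      have hjd : j ≠ d := opp1_main_ne_d hodd hd hi' h2
      rw [if_neg (by omega), if_neg (Ne.symm hjd)]
      have hij := (meet_iff hi' hjlt).mp hj.symm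
      refine (meet_iff hjlt hi').mpr ?_
      rw [Nat.add_comm j i]; exact hij

theorem opp1_day_unique {m d d' i j : ℕ} (hodd : m % 2 = 1) (hd : d < m)
    (hd' : d' < m) (hi : i < m + 1) (h : opp1 m d i = j) (h' : opp1 m d' i = j) :
    d = d' := by
  by_cases h1 : i = m
  · unfold opp1 at h h'; rw [if_pos h1] at h h'; omega
  · have hi' : i < m := by omega
    unfold opp1 at h h'
    rw [if_neg h1] at h h'
    by_cases h2 : d = i
    · rw [if_pos h2] at h
      by_cases h3 : d' = i
      · omega
      · rw [if_neg h3] at h'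
        have : j < m := h' ▸ Nat.mod_lt _ (by omega)
        omega
    · rw [if_neg h2] at h
      by_cases h3 : d' = i
      · rw [if_pos h3] at h'
        have : j < m := h ▸ Nat.mod_lt _ (by omega)
        omega
      · rw [if_neg h3] at h'
        have hjlt : j < m := h ▸ Nat.mod_lt _ (by omega)
        have ha := (meet_iff hi' hjlt).mp h
        have hb := (meet_iff hi' hjlt).mp h'
        have := cancel2 hodd (Nat.ModEq.trans (Nat.ModEq.symm (show Nat.ModEq m (i+j) (2*d) from ha)) hb)
        rw [Nat.mod_eq_of_lt hd, Nat.mod_eq_of_lt hd'] at this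
        exact this

theorem meet_exists {m i j : ℕ} (hodd : m % 2 = 1) (hm : 0 < m) (hi : i < m + 1)
    (hj : j < m + 1) (hij : i ≠ j) : ∃ d, d < m ∧ opp1 m d i = j := by
  by_cases h1 : i = m
  · refine ⟨j, by omega, ?_⟩
    unfold opp1; rw [if_pos h1]
  · by_cases h2 : j = m
    · refine ⟨i, by omega, ?_⟩
      unfold opp1; rw [if_neg h1, if_pos rfl, h2]
    · have hi' : i < m := by omega
      have hj' : j < m := by omega
      refine ⟨((i + j) * ((m + 1) / 2)) % m, Nat.mod_lt _ hm, ?_⟩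
      set d := ((i + j) * ((m + 1) / 2)) % m with hdd
      have key : (i + j) % m = (2 * d) % m := by
        have h4 : 2 * d ≡ 2 * ((i + j) * ((m + 1) / 2)) [MOD m] :=
          Nat.ModEq.mul_left 2 (Nat.mod_modEq _ m)
        have e : 2 * ((i + j) * ((m + 1) / 2)) = (i + j) * (m + 1) := by
          have : 2 * ((m + 1) / 2) = m + 1 := by omega
          calc 2 * ((i + j) * ((m + 1) / 2)) = (i + j) * (2 * ((m + 1) / 2)) := by ring
            _ = (i + j) * (m + 1) := by rw [this]
        rw [e] at h4
        have h6 : (m + 1) % m = 1 % m := by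
          rw [Nat.add_comm]; exact Nat.add_mod_right 1 m
        have h5 : (i + j) * (m + 1) ≡ i + j [MOD m] := by
          calc (i + j) * (m + 1) ≡ (i + j) * 1 [MOD m] := Nat.ModEq.mul_left _ h6
            _ = i + j := by ring
        exact (h4.trans h5).symm
      have hdne : d ≠ i := by
        intro h
        rw [h] at key
        have h4 : i + j ≡ i + i [MOD m] := by
          have : (i + i) % m = (2 * i) % m := by ring_nf
          exact Nat.ModEq.trans key this.symm
        have h5 : j ≡ i [MOD m] := Nat.ModEq.add_left_cancel' i h4
        have : j % m = i % m := h5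
        rw [Nat.mod_eq_of_lt hj', Nat.mod_eq_of_lt hi'] at this
        omega
      unfold opp1
      rw [if_neg h1, if_neg hdne]
      exact (meet_iff hi' hj').mpr key

theorem eq_m_of_mod {m x : ℕ} (h0 : 0 < x) (h2 : x < 2*m) (h : x % m = 0) :
    x = m := by
  obtain ⟨k, hk⟩ := Nat.dvd_of_mod_eq_zero h
  rcases k with _ | _ | k
  · omega
  · omega
  · have : m * 2 ≤ m * (k+1+1) := Nat.mul_le_mul_left m (by omega)
    omega

theorem loc1_char {m d i : ℕ} (hodd : m % 2 = 1) (hd : d < m) (hi : i < m)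
    (hdi : d ≠ i) : loc1 m d i = decide ((i + m - d) % m % 2 = 0) := by
  unfold loc1
  rw [if_neg (by omega), if_neg hdi]
  by_cases h : d < i
  · rw [if_pos h]
    have e : i + m - d = (i - d) + m := by omega
    rw [e, Nat.add_mod_right, Nat.mod_eq_of_lt (show i - d < m by omega)]
    rw [decide_eq_decide]; omega
  · rw [if_neg h]
    rw [Nat.mod_eq_of_lt (show i + m - d < m by omega)]
    rw [decide_eq_decide]; omega

theorem loc1_opp1 {m d i : ℕ} (hodd : m % 2 = 1) (hd : d < m) (hi : i < m + 1) :
    loc1 m d (opp1 m d i) = !(loc1 m d i) := by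
  by_cases h1 : i = m
  · subst h1
    unfold opp1 loc1
    rw [if_pos rfl, if_neg (by omega), if_pos rfl, if_pos rfl]
    rw [← decide_not, decide_eq_decide]; omega
  · by_cases h2 : d = i
    · unfold opp1 loc1
      rw [if_neg h1, if_pos h2, if_pos rfl, if_neg h1, if_pos h2]
      rw [← decide_not, decide_eq_decide]; omega
    · have hi' : i < m := by omega
      have hne := opp1_ne hodd hd hi
      have hj : opp1 m d i = (2 * d + (m - i)) % m := by
        unfold opp1; rw [if_neg h1, if_neg h2]
      set j := (2 * d + (m - i)) % m with hjdef
      have hjlt : j < m := Nat.mod_lt _ (by omega)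
      have hjd : j ≠ d := opp1_main_ne_d hodd hd hi' h2
      have hji : j ≠ i := hj ▸ hne
      rw [hj, loc1_char hodd hd hjlt (Ne.symm hjd), loc1_char hodd hd hi' h2]
      set ti := (i + m - d) % m with hti
      set tj := (j + m - d) % m with htj
      have hti_lt : ti < m := Nat.mod_lt _ (by omega)
      have htj_lt : tj < m := Nat.mod_lt _ (by omega)
      have hti_ne : ti ≠ 0 := by
        intro h
        have := eq_m_of_mod (m := m) (x := i + m - d) (by omega) (by omega) h
        omega
      have htj_ne : tj ≠ 0 := by
        intro h
        have := eq_m_of_mod (m := m) (x := j + m - d) (by omega) (by omega) h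
        omega
      have hsum : (ti + tj) % m = 0 := by
        have h1' : ti + tj ≡ (i + m - d) + (j + m - d) [MOD m] :=
          Nat.ModEq.add (Nat.mod_modEq _ m) (Nat.mod_modEq _ m)
        have e1 : (j + m - d) = j + (m - d) := by omega
        have h2' : j + (m - d) ≡ (2 * d + (m - i)) + (m - d) [MOD m] :=
          Nat.ModEq.add_right _ (Nat.mod_modEq _ m)
        have h3' : ti + tj ≡ (i + m - d) + ((2 * d + (m - i)) + (m - d)) [MOD m] := by
          refine h1'.trans ?_
          rw [e1]
          exact Nat.ModEq.add_left _ h2'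
        have e2 : (i + m - d) + ((2 * d + (m - i)) + (m - d)) = 3 * m := by omega
        rw [e2] at h3'
        have h4' : (3 * m) % m = 0 := by simp
        calc (ti + tj) % m = (3 * m) % m := h3'
          _ = 0 := h4' 
      have hsum' : ti + tj = m := eq_m_of_mod (by omega) (by omega) hsum
      rw [← decide_not, decide_eq_decide]; omega

theorem T1 {m d i : ℕ} (hodd : m % 2 = 1) (hm : 9 ≤ m) (hi : i < m + 1)
    (hd : d + 2 < m) :
    ¬(loc1 m (d+1) i = loc1 m d i ∧ loc1 m (d+2) i = loc1 m (d+1) i) := by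
  unfold loc1
  split_ifs <;> simp_all [decide_eq_decide] <;> omega

theorem T2 {m i : ℕ} (hodd : m % 2 = 1) (hm : 9 ≤ m) (hi : i < m + 1) :
    ¬(loc1 m (m-1) i = loc1 m (m-2) i ∧ (!loc1 m 1 i) = loc1 m (m-1) i) := by
  unfold loc1
  split_ifs <;> simp_all [decide_eq_decide] <;> omega

theorem T3 {m i : ℕ} (hodd : m % 2 = 1) (hm : 9 ≤ m) (hi : i < m + 1) :
    ¬((!loc1 m 1 i) = loc1 m (m-1) i ∧ (!loc1 m 2 i) = (!loc1 m 1 i)) := by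
  unfold loc1
  split_ifs <;> simp_all [decide_eq_decide] <;> omega

theorem T4 {m i : ℕ} (hodd : m % 2 = 1) (hm : 9 ≤ m) (hi : i < m + 1) :
    ¬(loc1 m (m-1) i = loc1 m (m-2) i ∧ loc1 m 0 i = loc1 m (m-1) i) := by
  unfold loc1
  split_ifs <;> simp_all [decide_eq_decide] <;> omega


theorem mod_small {m e x : ℕ} (h : x = e + m) (he : e < m) : x % m = e := by
  subst h; rw [Nat.add_mod_right]; exact Nat.mod_eq_of_lt he

theorem orig_id {m d : ℕ} (h : d < m) : orig m d = d := if_pos h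

theorem orig_hi {m d : ℕ} (h : ¬ d < m) : orig m d = (d + 1) % m := if_neg h

def day2 (m d0 : ℕ) : ℕ := if d0 = 0 then 2*m - 1 else m + d0 - 1

theorem day2_bounds {m d0 : ℕ} (hm : 0 < m) (hd0 : d0 < m) :
    m ≤ day2 m d0 ∧ day2 m d0 < 2*m := by
  unfold day2; split_ifs <;> omega

theorem orig_day2 {m d0 : ℕ} (hm : 0 < m) (hd0 : d0 < m) :
    orig m (day2 m d0) = d0 := by
  unfold day2
  split_ifs with h
  · rw [orig_hi (by omega)]
    have e : 2*m - 1 + 1 = 0 + m * 2 := by omega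
    subst h
    rw [e, Nat.add_mul_mod_self_left, Nat.zero_mod]
  · rw [orig_hi (by omega)]
    exact mod_small (by omega) hd0

theorem day2_unique {m d0 D : ℕ} (hm : 0 < m) (hd0 : d0 < m) (hD1 : m ≤ D)
    (hD2 : D < 2*m) (h : orig m D = d0) : D = day2 m d0 := by
  rw [orig_hi (by omega)] at h
  unfold day2
  by_cases hc : D + 1 = 2*m
  · have h0 : (D + 1) % m = 0 := by
      rw [hc]
      have e : 2*m = 0 + m * 2 := by omega
      rw [e, Nat.add_mul_mod_self_left, Nat.zero_mod]
    rw [h0] at h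
    rw [if_pos h.symm]
    omega
  · have h0 : (D + 1) % m = D + 1 - m := mod_small (by omega) (by omega)
    rw [h0] at h
    rw [if_neg (by omega)]
    omega

/-- The full-schedule opponent function. -/
def oppF (n : ℕ) (D : Fin (2*(n-1))) (i : Fin n) : Fin n :=
  if h : opp1 (n-1) (orig (n-1) D.val) i.val < n then ⟨_, h⟩ else i

/-- The full-schedule home/away function. -/
def locF (n : ℕ) (D : Fin (2*(n-1))) (i : Fin n) : Bool :=
  if D.val < n-1 then loc1 (n-1) (orig (n-1) D.val) i.val
  else !(loc1 (n-1) (orig (n-1) D.val) i.val)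

theorem oppF_val {n : ℕ} (hn : 10 ≤ n) (D : Fin (2*(n-1))) (i : Fin n) :
    (oppF n D i).val = opp1 (n-1) (orig (n-1) D.val) i.val := by
  have h : opp1 (n-1) (orig (n-1) D.val) i.val < n := by
    have h1 : orig (n-1) D.val < n-1 := orig_lt (by omega)
    have h2 := opp1_lt (m := n-1) (by omega) h1 (i := i.val) (by omega)
    omega
  unfold oppF
  rw [dif_pos h]

theorem locF_eval {n : ℕ} (hn : 10 ≤ n) (D : Fin (2*(n-1))) (i : Fin n) :
    locF n D i = if D.val < n-1 then loc1 (n-1) D.val i.val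
      else !(loc1 (n-1) ((D.val+1) % (n-1)) i.val) := by
  unfold locF
  by_cases h : D.val < n-1
  · rw [if_pos h, if_pos h, orig_id h]
  · rw [if_neg h, if_neg h, orig_hi h]

theorem orig_succ_ne {m d : ℕ} (hm : 3 ≤ m) (hd : d + 1 < 2*m) :
    orig m (d+1) ≠ orig m d := by
  by_cases h1 : d + 1 < m
  · rw [orig_id h1, orig_id (by omega)]; omega
  · by_cases h2 : d < m
    · rw [orig_hi h1, orig_id h2]
      rw [mod_small (show d+1+1 = 1 + m by omega) (by omega)]
      omega
    · rw [orig_hi h1, orig_hi h2]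
      rw [mod_small (show d+1 = (d+1-m) + m by omega) (by omega)]
      by_cases h3 : d + 2 = 2*m
      · rw [show d+1+1 = 0 + m*2 by omega, Nat.add_mul_mod_self_left, Nat.zero_mod]
        omega
      · rw [mod_small (show d+1+1 = (d+2-m) + m by omega) (by omega)]
        omega

end TTPAux

open TTPAux

/-- For every `n ≥ 10` with `n ≡ 2 (mod 4)` there exists a feasible TTP-2
schedule for `n` teams. -/
theorem exists_feasible_schedule_of_mod_four_eq_two (n : ℕ) (hn : 10 ≤ n)
    (hmod : n % 4 = 2) :
    ∃ (opp : Fin (2*(n-1)) → Fin n → Fin n)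
      (loc : Fin (2*(n-1)) → Fin n → Bool), ttpFeasible n opp loc := by
  have hodd : (n-1) % 2 = 1 := by omega
  have hm9 : 9 ≤ n - 1 := by omega
  refine ⟨oppF n, locF n, ?_, ?_, ?_, ?_, ?_, ?_⟩
  · -- opponent is never self
    intro D i h
    have hv := congrArg Fin.val h
    rw [oppF_val hn] at hv
    exact opp1_ne hodd (orig_lt (by omega)) (by omega) hv
  · -- involution
    intro D i
    apply Fin.ext
    rw [oppF_val hn, oppF_val hn]
    exact opp1_invol hodd (orig_lt (by omega)) (by omega)
  · -- home/away antisymmetry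
    intro D i
    rw [locF_eval hn, locF_eval hn]
    by_cases hD : D.val < n-1
    · rw [if_pos hD, if_pos hD, oppF_val hn, orig_id hD]
      exact loc1_opp1 hodd (by omega) (by omega)
    · rw [if_neg hD, if_neg hD, oppF_val hn, orig_hi hD,
        loc1_opp1 hodd (Nat.mod_lt _ (by omega)) (by omega)]
  · -- unique away game against each opponent
    intro i j hij
    have hvi : i.val < (n-1) + 1 := by omega
    have hvj : j.val < (n-1) + 1 := by omega
    have hijv : i.val ≠ j.val := fun h => hij (Fin.ext h)
    obtain ⟨d0, hd0, hmeet⟩ := meet_exists hodd (by omega) hvi hvj hijv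
    obtain ⟨hD2a, hD2b⟩ := day2_bounds (m := n-1) (by omega) hd0
    have horig2 := orig_day2 (m := n-1) (by omega) hd0
    have hd2mod : (day2 (n-1) d0 + 1) % (n-1) = d0 := by
      rw [orig_hi (by omega)] at horig2; exact horig2
    by_cases hb : loc1 (n-1) d0 i.val = false
    · refine ⟨⟨d0, by omega⟩, ⟨?_, ?_⟩, ?_⟩
      · apply Fin.ext
        rw [oppF_val hn]
        show opp1 (n-1) (orig (n-1) d0) i.val = j.val
        rw [orig_id hd0]; exact hmeet
      · rw [locF_eval hn]
        show (if d0 < n-1 then loc1 (n-1) d0 i.val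
          else !(loc1 (n-1) ((d0+1) % (n-1)) i.val)) = false
        rw [if_pos hd0]; exact hb
      · rintro D' ⟨h1, h2⟩
        apply Fin.ext
        have hv1 : opp1 (n-1) (orig (n-1) D'.val) i.val = j.val := by
          have := congrArg Fin.val h1; rwa [oppF_val hn] at this
        have hod : orig (n-1) D'.val = d0 :=
          opp1_day_unique hodd (orig_lt (by omega)) hd0 hvi hv1 hmeet
        rw [locF_eval hn] at h2
        by_cases hD' : D'.val < n-1
        · rw [if_pos hD'] at h2
          show D'.val = d0
          rw [orig_id hD'] at hod; exact hod
        · exfalso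
          rw [if_neg hD'] at h2
          rw [orig_hi hD'] at hod
          rw [hod, hb] at h2
          simp at h2
    · have hb' : loc1 (n-1) d0 i.val = true := by
        revert hb; cases loc1 (n-1) d0 i.val <;> simp
      refine ⟨⟨day2 (n-1) d0, by omega⟩, ⟨?_, ?_⟩, ?_⟩
      · apply Fin.ext
        rw [oppF_val hn]
        show opp1 (n-1) (orig (n-1) (day2 (n-1) d0)) i.val = j.val
        rw [horig2]; exact hmeet
      · rw [locF_eval hn]
        show (if day2 (n-1) d0 < n-1 then loc1 (n-1) (day2 (n-1) d0) i.val
          else !(loc1 (n-1) ((day2 (n-1) d0 + 1) % (n-1)) i.val)) = false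
        rw [if_neg (by omega), hd2mod, hb']
        rfl
      · rintro D' ⟨h1, h2⟩
        apply Fin.ext
        have hv1 : opp1 (n-1) (orig (n-1) D'.val) i.val = j.val := by
          have := congrArg Fin.val h1; rwa [oppF_val hn] at this
        have hod : orig (n-1) D'.val = d0 :=
          opp1_day_unique hodd (orig_lt (by omega)) hd0 hvi hv1 hmeet
        rw [locF_eval hn] at h2
        by_cases hD' : D'.val < n-1
        · exfalso
          rw [if_pos hD'] at h2
          rw [orig_id hD'] at hod
          rw [hod, hb'] at h2
          simp at h2
        · show D'.val = day2 (n-1) d0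
          have hlt := D'.isLt
          exact day2_unique (by omega) hd0 (by omega) (by omega) hod
  · -- no repeated opponents on consecutive days
    intro d hd i h
    have hv := congrArg Fin.val h
    rw [oppF_val hn, oppF_val hn] at hv
    have heq : orig (n-1) (d+1) = orig (n-1) d :=
      opp1_day_unique hodd (orig_lt (by omega)) (orig_lt (by omega)) (by omega)
        hv rfl
    exact orig_succ_ne (by omega) (by omega) heq
  · -- at most two consecutive days at the same venue
    intro d hd i
    rw [locF_eval hn, locF_eval hn, locF_eval hn]
    show ¬((if d+1 < n-1 then loc1 (n-1) (d+1) i.val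
          else !(loc1 (n-1) ((d+1+1) % (n-1)) i.val)) =
        (if d < n-1 then loc1 (n-1) d i.val
          else !(loc1 (n-1) ((d+1) % (n-1)) i.val)) ∧
      (if d+2 < n-1 then loc1 (n-1) (d+2) i.val
          else !(loc1 (n-1) ((d+2+1) % (n-1)) i.val)) =
        (if d+1 < n-1 then loc1 (n-1) (d+1) i.val
          else !(loc1 (n-1) ((d+1+1) % (n-1)) i.val)))
    by_cases c1 : d + 2 < n-1
    · rw [if_pos c1, if_pos (by omega), if_pos (by omega)]
      exact T1 hodd hm9 (by omega) c1
    · by_cases c2 : d + 2 = n-1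
      · rw [if_neg c1, if_pos (by omega), if_pos (by omega)]
        rw [mod_small (show d+2+1 = 1 + (n-1) by omega) (by omega)]
        rw [show d + 1 = n-1-1 by omega, show d = n-1-2 by omega]
        exact T2 hodd hm9 (by omega)
      · by_cases c3 : d + 1 = n-1
        · rw [if_neg c1, if_neg (by omega), if_pos (by omega)]
          rw [mod_small (show d+1+1 = 1 + (n-1) by omega) (by omega)]
          rw [mod_small (show d+2+1 = 2 + (n-1) by omega) (by omega)]
          rw [show d = n-1-1 by omega]
          exact T3 hodd hm9 (by omega)
        · -- all three days in the second round
          have hdm : n-1 ≤ d := by omega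
          rw [if_neg c1, if_neg (by omega), if_neg (by omega)]
          by_cases c4 : d + 3 < 2*(n-1)
          · rw [mod_small (show d+1 = (d+1-(n-1)) + (n-1) by omega) (by omega),
              mod_small (show d+1+1 = (d+1-(n-1)+1) + (n-1) by omega) (by omega),
              mod_small (show d+2+1 = (d+1-(n-1)+2) + (n-1) by omega) (by omega)]
            rintro ⟨h1, h2⟩
            exact T1 hodd hm9 (i := i.val) (d := d+1-(n-1)) (by omega) (by omega)
              ⟨Bool.not_inj h1, Bool.not_inj h2⟩
          · -- wrap-around triple (m-2, m-1, 0)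
            rw [mod_small (show d+1 = (n-1-2) + (n-1) by omega) (by omega),
              mod_small (show d+1+1 = (n-1-1) + (n-1) by omega) (by omega)]
            rw [show d+2+1 = 0 + (n-1)*2 by omega, Nat.add_mul_mod_self_left,
              Nat.zero_mod]
            rintro ⟨h1, h2⟩
            exact T4 hodd hm9 (i := i.val) (by omega)
              ⟨Bool.not_inj h1, Bool.not_inj h2⟩
end
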